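/- Theorem 1 (convergence of SLOTAlign to a critical point): Suppose the iterates (π^k, α^k) ∈ C × Θ, k ≥ 0, are generated by the alternating updates α^{k+1} = argmin_{α∈Θ}{⟨∇_α F(π^k, α^k), α⟩ + (1/(2τ))‖α − α^k‖²} and π^{k+1} = argmin_{π∈C}{⟨∇_π F(π^k, α^{k+1}), π⟩ + (1/η)KL(π‖π^k)} with each π^k entrywise positive, where 0 < τ < 1/L_f^α and 0 < ε < η < 1/L_f^π with L_f^α and L_f^π the block gradient Lipschitz moduli of F on C × Θ. If (π^∞, α^∞) is the limit of a convergent subsequence (π^{n_k}, α^{n_k}) and π^∞ is entrywise positive, then (π^∞, α^∞) is a critical point of F̄(π, α) = F(π, α) + I_C(π) + I_Θ(α); that is, −∇_α F(π^∞, α^∞) lies in the normal cone of Θ at α^∞ and −∇_π F(π^∞, α^∞) lies in the normal cone of C at π^∞, or equivalently ⟨∇_α F(π^∞, α^∞), α − α^∞⟩ ≥ 0 for all α ∈ Θ and ⟨∇_π F(π^∞, α^∞), π − π^∞⟩ ≥ 0 for all π ∈ C. -/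

import Mathlib

open scoped RealInnerProductSpace BigOperators

/-- The Kullback–Leibler divergence between two couplings (viewed as elements of the
Euclidean space of `n×m` arrays), `KL(P‖Q) = Σ_p (P_p log(P_p/Q_p) − P_p + Q_p)`
(with the convention `0·log 0 = 0`, automatic since `Real.log 0 = 0`). -/
noncomputable def vecKL {ι : Type*} [Fintype ι] (P Q : ι → ℝ) : ℝ :=
  ∑ p, (P p * Real.log (P p / Q p) - P p + Q p)

/-- The set `Θ = Δ_K × Δ_K` of concatenated weight vectors `α = (β_s, β_t)`:
all entries are nonnegative and each block sums to `1`. -/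
def weightSet (K : ℕ) : Set (EuclideanSpace ℝ (Fin K ⊕ Fin K)) :=
  {α | (∀ p, 0 ≤ α p) ∧ (∑ q, α (Sum.inl q) = 1) ∧ (∑ q, α (Sum.inr q) = 1)}

/-- The transport polytope with uniform marginals, viewed inside the Euclidean space
of `n×m` arrays (Frobenius norm). -/
def transportSet (n m : ℕ) : Set (EuclideanSpace ℝ (Fin n × Fin m)) :=
  {π | (∀ p, 0 ≤ π p) ∧ (∀ i, ∑ k, π (i, k) = 1 / (n : ℝ)) ∧
    (∀ k, ∑ i, π (i, k) = 1 / (m : ℝ))}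

/-- The SLOTAlign objective `F(π, α)` with `α = (β_s, β_t)`:
`F = (1/n²) Σᵢⱼ (Σ_q βs_q Ds_q(i,j))² + (1/m²) Σₖₗ (Σ_q βt_q Dt_q(k,l))²
  − 2 tr((Σ_q βs_q Ds_q) π (Σ_q βt_q Dt_q) πᵀ)`,
the trace written out as
`Σᵢⱼₖₗ (Σ_q βs_q Ds_q(i,j)) π(j,k) (Σ_q βt_q Dt_q(k,l)) π(i,l)`. -/
noncomputable def slotFE {n m K : ℕ} (Ds : Fin K → Matrix (Fin n) (Fin n) ℝ)
    (Dt : Fin K → Matrix (Fin m) (Fin m) ℝ)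
    (π : EuclideanSpace ℝ (Fin n × Fin m))
    (α : EuclideanSpace ℝ (Fin K ⊕ Fin K)) : ℝ :=
  (1 / (n : ℝ) ^ 2) * ∑ i, ∑ j, (∑ q, α (Sum.inl q) * Ds q i j) ^ 2
  + (1 / (m : ℝ) ^ 2) * ∑ k, ∑ l, (∑ q, α (Sum.inr q) * Dt q k l) ^ 2
  - 2 * ∑ i, ∑ j, ∑ k, ∑ l,
      (∑ q, α (Sum.inl q) * Ds q i j) * π (j, k)
        * (∑ q, α (Sum.inr q) * Dt q k l) * π (i, l)

/-!
Both block updates are linearized proximal steps. By the descent lemma for an `L`-Lipschitz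
gradient, the `α`-step decreases `F` by at least `(1/(2τ) - Lα/2) ‖Δα‖²` and the `π`-step by at
least `(1/(2η) - Lπ/2) ‖Δπ‖²`; for the entropic step the quadratic term comes from
`‖P - Q‖² ≤ 2 KL(P‖Q)`, valid on the transport polytope because its entries are at most `1/2`
once `n ≥ 2`. So `F(π^k, α^k)` is nonincreasing and bounded below by its limit along the
subsequence, and the increments of both blocks tend to `0`. The subsequence shifted by one step
then has the same limit, and passing to the limit in the optimality of the updates shows that
`α^∞` minimizes `⟪∇_α F, ·⟫ + ‖· - α^∞‖²/(2τ)` over `Θ` and `π^∞` minimizes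
`⟪∇_π F, ·⟫ + KL(·‖π^∞)/η` over `C`. Both penalties vanish to first order at the minimizer, so
Fermat's rule on a convex set gives the two variational inequalities.
-/

open Filter Topology InformationTheory

section KullbackLeibler

lemma sq_sqrt_sub_one_le_klFun {x : ℝ} (hx : 0 ≤ x) : (√x - 1) ^ 2 ≤ klFun x := by
  rcases hx.eq_or_lt with rfl | hx
  · simp [klFun_zero]
  obtain ⟨s, hs, rfl⟩ : ∃ s, 0 < s ∧ x = s ^ 2 :=
    ⟨√x, Real.sqrt_pos.2 hx, (Real.sq_sqrt hx.le).symm⟩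
  have hlog : s * (s - 1) ≤ s ^ 2 * Real.log s :=
    calc s * (s - 1) = s ^ 2 * (1 - s⁻¹) := by field_simp
      _ ≤ s ^ 2 * Real.log s := by gcongr; exact Real.one_sub_inv_le_log_of_pos hs
  rw [Real.sqrt_sq hs.le, klFun_apply, Real.log_pow]
  push_cast
  nlinarith

lemma sq_sub_one_le_two_mul_add_one_mul_klFun {x : ℝ} (hx : 0 ≤ x) :
    (x - 1) ^ 2 ≤ 2 * (x + 1) * klFun x := by
  have hsq : √x ^ 2 = x := Real.sq_sqrt hx
  have hsum : (√x + 1) ^ 2 ≤ 2 * (x + 1) := by nlinarith [sq_nonneg (√x - 1)]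
  calc (x - 1) ^ 2 = (√x - 1) ^ 2 * (√x + 1) ^ 2 := by nth_rw 1 [← hsq]; ring
    _ ≤ klFun x * (2 * (x + 1)) :=
        mul_le_mul (sq_sqrt_sub_one_le_klFun hx) hsum (sq_nonneg _) (klFun_nonneg hx)
    _ = 2 * (x + 1) * klFun x := by ring

variable {ι : Type*} [Fintype ι]

lemma vecKL_eq_sum_mul_klFun (P : ι → ℝ) {Q : ι → ℝ} (hQ : ∀ i, Q i ≠ 0) :
    vecKL P Q = ∑ i, Q i * klFun (P i / Q i) := by
  refine Finset.sum_congr rfl fun i _ => ?_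
  rw [klFun_apply]
  field_simp [hQ i]
  ring

lemma vecKL_self (P : ι → ℝ) : vecKL P P = 0 := by
  simp [vecKL, Real.log_div_self]

lemma vecKL_nonneg {P Q : ι → ℝ} (hP : ∀ i, 0 ≤ P i) (hQ : ∀ i, 0 < Q i) : 0 ≤ vecKL P Q := by
  rw [vecKL_eq_sum_mul_klFun P fun i => (hQ i).ne']
  exact Finset.sum_nonneg fun i _ =>
    mul_nonneg (hQ i).le (klFun_nonneg (div_nonneg (hP i) (hQ i).le))

lemma sq_norm_sub_le_two_mul_vecKL {P Q : EuclideanSpace ℝ ι} (hP : ∀ i, 0 ≤ P i)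
    (hQ : ∀ i, 0 < Q i) (hPQ : ∀ i, P i + Q i ≤ 1) : ‖P - Q‖ ^ 2 ≤ 2 * vecKL P Q := by
  rw [EuclideanSpace.norm_sq_eq, vecKL_eq_sum_mul_klFun P fun i => (hQ i).ne', Finset.mul_sum]
  refine Finset.sum_le_sum fun i _ => ?_
  set x := P i / Q i
  have hx : 0 ≤ x := div_nonneg (hP i) (hQ i).le
  have hPx : P i = Q i * x := (mul_div_cancel₀ (P i) (hQ i).ne').symm
  have hk := sq_sub_one_le_two_mul_add_one_mul_klFun hx
  have hQx : Q i * (x + 1) ≤ 1 := by nlinarith [hPQ i]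
  rw [Real.norm_eq_abs, sq_abs, PiLp.sub_apply, hPx]
  calc (Q i * x - Q i) ^ 2 = Q i ^ 2 * (x - 1) ^ 2 := by ring
    _ ≤ Q i ^ 2 * (2 * (x + 1) * klFun x) := by gcongr
    _ = 2 * (Q i * (x + 1)) * (Q i * klFun x) := by ring
    _ ≤ 2 * 1 * (Q i * klFun x) := by
        gcongr
        exact mul_nonneg (hQ i).le (klFun_nonneg hx)
    _ = 2 * (Q i * klFun x) := by ring

lemma continuousAt_vecKL_right (P : ι → ℝ) {Q : ι → ℝ} (hQ : ∀ i, Q i ≠ 0) :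
    ContinuousAt (vecKL P) Q := by
  have hterm : ∀ i, ContinuousAt (fun R : ι → ℝ => P i * Real.log (P i / R i) - P i + R i) Q := by
    intro i
    have hRi : ContinuousAt (fun R : ι → ℝ => R i) Q := (continuous_apply i).continuousAt
    rcases eq_or_ne (P i) 0 with hP | hP
    · simpa [hP] using hRi
    · have hlog := (continuousAt_const.div hRi (hQ i)).log (div_ne_zero hP (hQ i))
      exact ((continuousAt_const.mul hlog).sub continuousAt_const).add hRi
  exact tendsto_finsetSum _ fun i _ => hterm i

lemma hasFDerivAt_vecKL_left_self {Q : EuclideanSpace ℝ ι} (hQ : ∀ i, Q i ≠ 0) :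
    HasFDerivAt (fun P : EuclideanSpace ℝ ι => vecKL P Q) (0 : EuclideanSpace ℝ ι →L[ℝ] ℝ) Q := by
  simp_rw [vecKL_eq_sum_mul_klFun _ hQ]
  have hterm : ∀ i, HasDerivAt (fun s => Q i * klFun (s / Q i)) 0 (Q i) := fun i => by
    have hkl : HasDerivAt klFun 0 (Q i / Q i) := by
      simpa [div_self (hQ i)] using hasDerivAt_klFun one_ne_zero
    have hdiv : HasDerivAt (fun s => s / Q i) (Q i)⁻¹ (Q i) := by
      simpa using (hasDerivAt_id (Q i)).div_const (Q i)
    simpa using (hkl.comp (h := fun s => s / Q i) (Q i) hdiv).const_mul (Q i)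
  have := HasFDerivAt.fun_sum (u := Finset.univ) fun i _ =>
    (hterm i).comp_hasFDerivAt Q (EuclideanSpace.proj (𝕜 := ℝ) (ι := ι) i).hasFDerivAt
  simpa using this

end KullbackLeibler

section Constraints

lemma convex_weightSet (K : ℕ) : Convex ℝ (weightSet K) := by
  intro x hx y hy a b ha hb hab
  refine ⟨fun p => ?_, ?_, ?_⟩
  · simpa using add_nonneg (mul_nonneg ha (hx.1 p)) (mul_nonneg hb (hy.1 p))
  · simp [Finset.sum_add_distrib, ← Finset.mul_sum, hx.2.1, hy.2.1, hab]
  · simp [Finset.sum_add_distrib, ← Finset.mul_sum, hx.2.2, hy.2.2, hab]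

lemma isClosed_weightSet (K : ℕ) : IsClosed (weightSet K) := by
  simp only [weightSet, Set.ofPred_and, Set.ofPred_forall]
  exact .inter (isClosed_iInter fun p => isClosed_le continuous_const (by fun_prop))
    (.inter (isClosed_eq (by fun_prop) continuous_const)
      (isClosed_eq (by fun_prop) continuous_const))

lemma convex_transportSet (n m : ℕ) : Convex ℝ (transportSet n m) := by
  intro x hx y hy a b ha hb hab
  refine ⟨fun p => ?_, fun i => ?_, fun k => ?_⟩
  · simpa using add_nonneg (mul_nonneg ha (hx.1 p)) (mul_nonneg hb (hy.1 p))
  · simp [Finset.sum_add_distrib, ← Finset.mul_sum, hx.2.1 i, hy.2.1 i, ← add_mul, hab]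
  · simp [Finset.sum_add_distrib, ← Finset.mul_sum, hx.2.2 k, hy.2.2 k, ← add_mul, hab]

lemma isClosed_transportSet (n m : ℕ) : IsClosed (transportSet n m) := by
  simp only [transportSet, Set.ofPred_and, Set.ofPred_forall]
  exact .inter (isClosed_iInter fun p => isClosed_le continuous_const (by fun_prop))
    (.inter (isClosed_iInter fun i => isClosed_eq (by fun_prop) continuous_const)
      (isClosed_iInter fun k => isClosed_eq (by fun_prop) continuous_const))

lemma apply_le_one_div_of_mem_transportSet {n m : ℕ} {P : EuclideanSpace ℝ (Fin n × Fin m)}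
    (hP : P ∈ transportSet n m) (i : Fin n) (k : Fin m) : P (i, k) ≤ 1 / n :=
  hP.2.1 i ▸ Finset.single_le_sum (fun k' _ => hP.1 (i, k')) (Finset.mem_univ k)

-- Each column has a single entry, which the column constraint pins to `1 / m`.
lemma transportSet_subsingleton {n m : ℕ} (hn : n ≤ 1) : (transportSet n m).Subsingleton := by
  have : Subsingleton (Fin n) := Fin.subsingleton_iff_le_one.2 hn
  intro P hP Q hQ
  ext ⟨i, k⟩
  have hcol : ∀ R ∈ transportSet n m, R (i, k) = 1 / m := fun R hR => by
    rw [← hR.2.2 k, Fintype.sum_subsingleton _ i]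
  rw [hcol P hP, hcol Q hQ]

lemma sq_norm_sub_le_two_mul_vecKL_of_mem_transportSet {n m : ℕ}
    {P Q : EuclideanSpace ℝ (Fin n × Fin m)} (hP : P ∈ transportSet n m)
    (hQ : Q ∈ transportSet n m) (hQpos : ∀ p, 0 < Q p) : ‖P - Q‖ ^ 2 ≤ 2 * vecKL P Q := by
  rcases le_or_gt n 1 with hn | hn
  · simp [transportSet_subsingleton hn hP hQ, vecKL_self]
  refine sq_norm_sub_le_two_mul_vecKL hP.1 hQpos fun ⟨i, k⟩ => ?_
  have hn2 : (1 : ℝ) / n ≤ 1 / 2 := one_div_le_one_div_of_le two_pos (by exact_mod_cast hn)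
  linarith [apply_le_one_div_of_mem_transportSet hP i k,
    apply_le_one_div_of_mem_transportSet hQ i k]

lemma inner_add_sq_norm_le_of_entropic_step {n m : ℕ} {g P Q : EuclideanSpace ℝ (Fin n × Fin m)}
    {η : ℝ} (hη : 0 < η) (hP : P ∈ transportSet n m) (hQ : Q ∈ transportSet n m)
    (hQpos : ∀ p, 0 < Q p) (h : ⟪g, P⟫ + 1 / η * vecKL P Q ≤ ⟪g, Q⟫ + 1 / η * vecKL Q Q) :
    ⟪g, P⟫ + 1 / (2 * η) * ‖P - Q‖ ^ 2 ≤ ⟪g, Q⟫ := by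
  have hKL := sq_norm_sub_le_two_mul_vecKL_of_mem_transportSet hP hQ hQpos
  have : 1 / (2 * η) * ‖P - Q‖ ^ 2 ≤ 1 / η * vecKL P Q := by
    rw [one_div_mul_eq_div, one_div_mul_eq_div, div_le_div_iff₀ (by positivity) hη]
    nlinarith
  rw [vecKL_self, mul_zero, add_zero] at h
  linarith

end Constraints

section Descent

lemma one_div_two_mul_sub_div_two_pos {τ L : ℝ} (hτ : 0 < τ) (h : τ < 1 / L) :
    0 < 1 / (2 * τ) - L / 2 := by
  have hL : 0 < L := one_div_pos.mp (hτ.trans h)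
  rw [lt_one_div hτ hL] at h
  rw [mul_comm, ← div_div]
  linarith

variable {H : Type*} [NormedAddCommGroup H] [InnerProductSpace ℝ H] [CompleteSpace H]

lemma le_add_inner_add_of_lipschitz_gradient {f : H → ℝ} (hf : Differentiable ℝ f) {L : ℝ}
    (hL : ∀ a b, ‖gradient f a - gradient f b‖ ≤ L * ‖a - b‖) (x y : H) :
    f y ≤ f x + ⟪gradient f x, y - x⟫ + L / 2 * ‖y - x‖ ^ 2 := by
  set v := y - x
  set c := ⟪gradient f x, v⟫
  set h : ℝ → ℝ := fun t => f (x + t • v) - t * c - L / 2 * ‖v‖ ^ 2 * t ^ 2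
  have hder : ∀ t, HasDerivAt h (⟪gradient f (x + t • v), v⟫ - c - L * ‖v‖ ^ 2 * t) t := by
    intro t
    have hpath : HasDerivAt (fun t : ℝ => x + t • v) v t := by
      simpa using ((hasDerivAt_id t).smul_const v).const_add x
    have hft : HasDerivAt (fun t => f (x + t • v)) ⟪gradient f (x + t • v), v⟫ t := by
      rw [gradient, InnerProductSpace.toDual_symm_apply]
      exact (hf _).hasFDerivAt.comp_hasDerivAt t hpath
    exact ((hft.sub ((hasDerivAt_id t).mul_const c)).sub
      ((hasDerivAt_pow 2 t).const_mul (L / 2 * ‖v‖ ^ 2))).congr_deriv (by push_cast; ring)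
  have hslope : ∀ t ∈ Set.Ioo (0 : ℝ) 1, ⟪gradient f (x + t • v), v⟫ - c ≤ L * ‖v‖ ^ 2 * t := by
    intro t ht
    calc ⟪gradient f (x + t • v), v⟫ - c = ⟪gradient f (x + t • v) - gradient f x, v⟫ :=
          (inner_sub_left _ _ _).symm
      _ ≤ ‖gradient f (x + t • v) - gradient f x‖ * ‖v‖ := real_inner_le_norm _ _
      _ ≤ L * ‖x + t • v - x‖ * ‖v‖ := by gcongr; exact hL _ _
      _ = L * ‖v‖ ^ 2 * t := by
          rw [add_sub_cancel_left, norm_smul, Real.norm_of_nonneg ht.1.le]; ring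
  have hanti : AntitoneOn h (Set.Icc 0 1) := by
    refine antitoneOn_of_hasDerivWithinAt_nonpos (convex_Icc 0 1)
      (fun t _ => (hder t).continuousAt.continuousWithinAt) (fun t _ => (hder t).hasDerivWithinAt)
      fun t ht => ?_
    rw [interior_Icc] at ht
    linarith [hslope t ht]
  have h0 : h 0 = f x := by simp [h]
  have h1 : h 1 = f y - c - L / 2 * ‖v‖ ^ 2 := by simp [h, v]
  linarith [hanti (by norm_num) (by norm_num) zero_le_one]

lemma add_mul_sq_norm_le_of_linearized_step {f : H → ℝ} (hf : Differentiable ℝ f) {L : ℝ}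
    (hL : ∀ a b, ‖gradient f a - gradient f b‖ ≤ L * ‖a - b‖) {x y : H} {c : ℝ}
    (hstep : ⟪gradient f x, y⟫ + c * ‖y - x‖ ^ 2 ≤ ⟪gradient f x, x⟫) :
    f y + (c - L / 2) * ‖y - x‖ ^ 2 ≤ f x := by
  have := le_add_inner_add_of_lipschitz_gradient hf hL x y
  rw [inner_sub_right] at this
  linarith

end Descent

section PartialGradient

variable {H₁ H₂ : Type*} [NormedAddCommGroup H₁] [InnerProductSpace ℝ H₁]
  [NormedAddCommGroup H₂] [InnerProductSpace ℝ H₂]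

lemma ContDiff.continuous_gradient_right [CompleteSpace H₂] {Φ : H₁ × H₂ → ℝ}
    (hΦ : ContDiff ℝ 1 Φ) :
    Continuous fun p : H₁ × H₂ => gradient (fun y => Φ (p.1, y)) p.2 := by
  have hslice : ∀ p : H₁ × H₂, fderiv ℝ (fun y => Φ (p.1, y)) p.2 =
      (fderiv ℝ Φ p).comp (ContinuousLinearMap.inr ℝ H₁ H₂) := fun p =>
    ((hΦ.differentiable one_ne_zero p).hasFDerivAt.comp p.2
      (hasFDerivAt_prodMk_right p.1 p.2)).fderiv
  simp only [gradient, hslice]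
  exact (InnerProductSpace.toDual ℝ H₂).symm.continuous.comp
    (((ContinuousLinearMap.compL ℝ H₂ (H₁ × H₂) ℝ).flip
      (ContinuousLinearMap.inr ℝ H₁ H₂)).continuous.comp (hΦ.continuous_fderiv one_ne_zero))

lemma ContDiff.continuous_gradient_left [CompleteSpace H₁] {Φ : H₁ × H₂ → ℝ}
    (hΦ : ContDiff ℝ 1 Φ) :
    Continuous fun p : H₁ × H₂ => gradient (fun x => Φ (x, p.2)) p.1 :=
  (hΦ.comp (contDiff_snd.prodMk contDiff_fst)).continuous_gradient_right.comp continuous_swap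

end PartialGradient

section FirstOrder

variable {H : Type*} [NormedAddCommGroup H] [InnerProductSpace ℝ H]

lemma inner_sub_nonneg_of_isMinOn_inner_add {S : Set H} (hS : Convex ℝ S) {x g : H} {R : H → ℝ}
    (hx : x ∈ S) (hR : HasFDerivAt R (0 : H →L[ℝ] ℝ) x)
    (hmin : IsMinOn (fun a => ⟪g, a⟫ + R a) S x) {a : H} (ha : a ∈ S) : 0 ≤ ⟪g, a - x⟫ := by
  simpa using hmin.localize.hasFDerivWithinAt_nonneg
    (((innerSL ℝ g).hasFDerivAt.add hR).hasFDerivWithinAt)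
    (sub_mem_posTangentConeAt_of_segment_subset (hS.segment_subset hx ha))

lemma hasFDerivAt_sq_norm_sub_self (x : H) :
    HasFDerivAt (fun a => ‖a - x‖ ^ 2) (0 : H →L[ℝ] ℝ) x := by
  simpa using ((hasFDerivAt_id x).sub_const x).norm_sq

lemma isMinOn_inner_add_of_tendsto {S : Set H} {x g : H} {R : H → ℝ} (hR : R x = 0)
    {gs ys : ℕ → H} {Rs : ℕ → H → ℝ} (hg : Tendsto gs atTop (𝓝 g)) (hy : Tendsto ys atTop (𝓝 x))
    (hRs : ∀ a ∈ S, Tendsto (fun j => Rs j a) atTop (𝓝 (R a)))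
    (hmin : ∀ j, ∀ a ∈ S, ⟪gs j, ys j⟫ ≤ ⟪gs j, a⟫ + Rs j a) :
    IsMinOn (fun a => ⟪g, a⟫ + R a) S x := fun a ha => by
  simpa [hR] using le_of_tendsto_of_tendsto' (hg.inner hy)
    ((hg.inner tendsto_const_nhds).add (hRs a ha)) fun j => hmin j a ha

lemma inner_sub_nonneg_of_tendsto_linearized_min {S : Set H} (hS : Convex ℝ S) {x g : H}
    (hx : x ∈ S) {R : H → ℝ} (hR : R x = 0) (hR' : HasFDerivAt R (0 : H →L[ℝ] ℝ) x)
    {gs ys : ℕ → H} {Rs : ℕ → H → ℝ} (hg : Tendsto gs atTop (𝓝 g)) (hy : Tendsto ys atTop (𝓝 x))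
    (hRs : ∀ a ∈ S, Tendsto (fun j => Rs j a) atTop (𝓝 (R a)))
    (hmin : ∀ j, ∀ a ∈ S, ⟪gs j, ys j⟫ ≤ ⟪gs j, a⟫ + Rs j a) :
    ∀ a ∈ S, 0 ≤ ⟪g, a - x⟫ := fun _ ha =>
  inner_sub_nonneg_of_isMinOn_inner_add hS hx hR'
    (isMinOn_inner_add_of_tendsto hR hg hy hRs hmin) ha

lemma inner_sub_nonneg_of_tendsto_prox_sq_norm {S : Set H} (hS : Convex ℝ S) {x g : H}
    (hx : x ∈ S) {c : ℝ} (hc : 0 ≤ c) {gs ys xs : ℕ → H} (hg : Tendsto gs atTop (𝓝 g))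
    (hy : Tendsto ys atTop (𝓝 x)) (hxs : Tendsto xs atTop (𝓝 x))
    (hmin : ∀ j, ∀ a ∈ S,
      ⟪gs j, ys j⟫ + c * ‖ys j - xs j‖ ^ 2 ≤ ⟪gs j, a⟫ + c * ‖a - xs j‖ ^ 2) :
    ∀ a ∈ S, 0 ≤ ⟪g, a - x⟫ :=
  inner_sub_nonneg_of_tendsto_linearized_min hS hx (R := fun a => c * ‖a - x‖ ^ 2) (by simp)
    (by simpa using (hasFDerivAt_sq_norm_sub_self x).const_mul c) hg hy
    (fun a _ => ((hxs.const_sub a).norm.pow 2).const_mul c)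
    fun j a ha => (le_add_of_nonneg_right (by positivity)).trans (hmin j a ha)

lemma inner_sub_nonneg_of_tendsto_prox_vecKL {ι : Type*} [Fintype ι]
    {S : Set (EuclideanSpace ℝ ι)} (hS : Convex ℝ S) {x g : EuclideanSpace ℝ ι} (hx : x ∈ S)
    (hx₀ : ∀ i, x i ≠ 0) {c : ℝ} (hc : 0 ≤ c) {gs ys xs : ℕ → EuclideanSpace ℝ ι}
    (hg : Tendsto gs atTop (𝓝 g)) (hy : Tendsto ys atTop (𝓝 x)) (hxs : Tendsto xs atTop (𝓝 x))
    (hys : ∀ j i, 0 ≤ ys j i) (hxspos : ∀ j i, 0 < xs j i)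
    (hmin : ∀ j, ∀ a ∈ S,
      ⟪gs j, ys j⟫ + c * vecKL (ys j) (xs j) ≤ ⟪gs j, a⟫ + c * vecKL a (xs j)) :
    ∀ a ∈ S, 0 ≤ ⟪g, a - x⟫ :=
  inner_sub_nonneg_of_tendsto_linearized_min hS hx (R := fun a => c * vecKL a x)
    (by simp [vecKL_self]) (by simpa using (hasFDerivAt_vecKL_left_self hx₀).const_mul c) hg hy
    (fun a _ => ((continuousAt_vecKL_right _ hx₀).tendsto.comp
      (((PiLp.continuous_ofLp 2 _).tendsto x).comp hxs)).const_mul c)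
    fun j a ha => (le_add_of_nonneg_right (mul_nonneg hc (vecKL_nonneg (hys j) (hxspos j)))).trans
      (hmin j a ha)

end FirstOrder

section SufficientDecrease

lemma tendsto_sub_succ_of_antitone {E : ℕ → ℝ} (hE : Antitone E) {φ : ℕ → ℕ} (hφ : StrictMono φ)
    {l : ℝ} (hl : Tendsto (fun j => E (φ j)) atTop (𝓝 l)) :
    Tendsto (fun k => E k - E (k + 1)) atTop (𝓝 0) := by
  have hbdd : BddBelow (Set.range E) := ⟨l, Set.forall_mem_range.2 fun k =>
    ((hE.comp_monotone hφ.monotone).le_of_tendsto hl k).trans (hE hφ.le_apply)⟩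
  have hconv := tendsto_atTop_ciInf hE hbdd
  simpa using hconv.sub (hconv.comp (tendsto_add_atTop_nat 1))

lemma tendsto_zero_of_mul_sq_norm_le {X : Type*} [SeminormedAddCommGroup X] {u : ℕ → X}
    {e : ℕ → ℝ} {c : ℝ} (hc : 0 < c) (he : Tendsto e atTop (𝓝 0))
    (hu : ∀ k, c * ‖u k‖ ^ 2 ≤ e k) : Tendsto u atTop (𝓝 0) := by
  refine tendsto_zero_iff_norm_tendsto_zero.2 (squeeze_zero (fun k => norm_nonneg _)
    (fun k => Real.le_sqrt_of_sq_le ((le_div_iff₀' hc).2 (hu k))) ?_)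
  simpa using (he.div_const c).sqrt

lemma tendsto_sub_succ_of_alternating_decrease {X Y : Type*} [SeminormedAddCommGroup X]
    [SeminormedAddCommGroup Y] {E M : ℕ → ℝ} {x : ℕ → X} {y : ℕ → Y} {c d : ℝ} (hc : 0 < c)
    (hd : 0 < d) (hx : ∀ k, M k + c * ‖x (k + 1) - x k‖ ^ 2 ≤ E k)
    (hy : ∀ k, E (k + 1) + d * ‖y (k + 1) - y k‖ ^ 2 ≤ M k) {φ : ℕ → ℕ} (hφ : StrictMono φ)
    {l : ℝ} (hl : Tendsto (fun j => E (φ j)) atTop (𝓝 l)) :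
    Tendsto (fun k => x (k + 1) - x k) atTop (𝓝 0) ∧
      Tendsto (fun k => y (k + 1) - y k) atTop (𝓝 0) := by
  have hcx : ∀ k, 0 ≤ c * ‖x (k + 1) - x k‖ ^ 2 := fun k => by positivity
  have hdy : ∀ k, 0 ≤ d * ‖y (k + 1) - y k‖ ^ 2 := fun k => by positivity
  have hE : Antitone E := antitone_nat_of_succ_le fun k => by linarith [hx k, hy k, hcx k, hdy k]
  have h0 := tendsto_sub_succ_of_antitone hE hφ hl
  exact ⟨tendsto_zero_of_mul_sq_norm_le hc h0 fun k => by linarith [hx k, hy k, hdy k],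
    tendsto_zero_of_mul_sq_norm_le hd h0 fun k => by linarith [hx k, hy k, hcx k]⟩

end SufficientDecrease

section SLOTAlign

variable {n m K : ℕ} (Ds : Fin K → Matrix (Fin n) (Fin n) ℝ) (Dt : Fin K → Matrix (Fin m) (Fin m) ℝ)

lemma contDiff_slotFE :
    ContDiff ℝ 1 fun p : EuclideanSpace ℝ (Fin n × Fin m) × EuclideanSpace ℝ (Fin K ⊕ Fin K) =>
      slotFE Ds Dt p.1 p.2 := by
  unfold slotFE
  fun_prop

lemma differentiable_slotFE_left (α : EuclideanSpace ℝ (Fin K ⊕ Fin K)) :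
    Differentiable ℝ fun π => slotFE Ds Dt π α := by
  unfold slotFE
  fun_prop

lemma differentiable_slotFE_right (π : EuclideanSpace ℝ (Fin n × Fin m)) :
    Differentiable ℝ (slotFE Ds Dt π) := by
  unfold slotFE
  fun_prop

lemma tendsto_slotFE {π : ℕ → EuclideanSpace ℝ (Fin n × Fin m)}
    {α : ℕ → EuclideanSpace ℝ (Fin K ⊕ Fin K)} {π₀ α₀}
    (h : Tendsto (fun j => (π j, α j)) atTop (𝓝 (π₀, α₀))) :
    Tendsto (fun j => slotFE Ds Dt (π j) (α j)) atTop (𝓝 (slotFE Ds Dt π₀ α₀)) := by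
  -- elaborating the composition against the goal would make unification unfold `slotFE`
  have := ((contDiff_slotFE Ds Dt).continuous.tendsto (π₀, α₀)).comp h
  exact this

lemma tendsto_gradient_slotFE_right {π : ℕ → EuclideanSpace ℝ (Fin n × Fin m)}
    {α : ℕ → EuclideanSpace ℝ (Fin K ⊕ Fin K)} {π₀ α₀}
    (h : Tendsto (fun j => (π j, α j)) atTop (𝓝 (π₀, α₀))) :
    Tendsto (fun j => gradient (slotFE Ds Dt (π j)) (α j)) atTop
      (𝓝 (gradient (slotFE Ds Dt π₀) α₀)) := by
  have := ((contDiff_slotFE Ds Dt).continuous_gradient_right.tendsto (π₀, α₀)).comp h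
  exact this

lemma tendsto_gradient_slotFE_left {π : ℕ → EuclideanSpace ℝ (Fin n × Fin m)}
    {α : ℕ → EuclideanSpace ℝ (Fin K ⊕ Fin K)} {π₀ α₀}
    (h : Tendsto (fun j => (π j, α j)) atTop (𝓝 (π₀, α₀))) :
    Tendsto (fun j => gradient (fun x => slotFE Ds Dt x (α j)) (π j)) atTop
      (𝓝 (gradient (fun x => slotFE Ds Dt x α₀) π₀)) := by
  have := ((contDiff_slotFE Ds Dt).continuous_gradient_left.tendsto (π₀, α₀)).comp h
  exact this

end SLOTAlign

/-- **Theorem 1, convergence of SLOTAlign.** For iterates generated by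
the alternating SLOTAlign updates with step sizes `0 < τ < 1/Lα` and
`0 < ε < η < 1/Lπ` (each `π^k` entrywise positive), any limit point `(π^∞, α^∞)` of a
convergent subsequence with `π^∞` entrywise positive is a critical point of
`F̄(π, α) = F(π, α) + I_C(π) + I_Θ(α)`: `π^∞ ∈ C`, `α^∞ ∈ Θ`,
`−∇_α F(π^∞, α^∞) ∈ N_Θ(α^∞)` and `−∇_π F(π^∞, α^∞) ∈ N_C(π^∞)`, i.e.
`⟨∇_α F(π^∞, α^∞), α − α^∞⟩ ≥ 0` for all `α ∈ Θ` and
`⟨∇_π F(π^∞, α^∞), π − π^∞⟩ ≥ 0` for all `π ∈ C`. -/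
theorem slotalign_converges_to_critical_point (n m K : ℕ)
    (Ds : Fin K → Matrix (Fin n) (Fin n) ℝ)
    (Dt : Fin K → Matrix (Fin m) (Fin m) ℝ)
    (Lα Lπ τ η ε : ℝ)
    (hLα : ∀ π ∈ transportSet n m, ∀ a b : EuclideanSpace ℝ (Fin K ⊕ Fin K),
      ‖gradient (fun x => slotFE Ds Dt π x) a - gradient (fun x => slotFE Ds Dt π x) b‖
        ≤ Lα * ‖a - b‖)
    (hLπ : ∀ α ∈ weightSet K, ∀ p q : EuclideanSpace ℝ (Fin n × Fin m),
      ‖gradient (fun x => slotFE Ds Dt x α) p - gradient (fun x => slotFE Ds Dt x α) q‖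
        ≤ Lπ * ‖p - q‖)
    (hτ : 0 < τ) (hτ' : τ < 1 / Lα)
    (hε : 0 < ε) (hεη : ε < η) (hη' : η < 1 / Lπ)
    (π : ℕ → EuclideanSpace ℝ (Fin n × Fin m))
    (α : ℕ → EuclideanSpace ℝ (Fin K ⊕ Fin K))
    (hπmem : ∀ k, π k ∈ transportSet n m)
    (hαmem : ∀ k, α k ∈ weightSet K)
    (hπpos : ∀ k p, 0 < π k p)
    (hαmin : ∀ k, ∀ a ∈ weightSet K,
      ⟪gradient (fun x => slotFE Ds Dt (π k) x) (α k), α (k + 1)⟫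
          + 1 / (2 * τ) * ‖α (k + 1) - α k‖ ^ 2
        ≤ ⟪gradient (fun x => slotFE Ds Dt (π k) x) (α k), a⟫
          + 1 / (2 * τ) * ‖a - α k‖ ^ 2)
    (hπmin : ∀ k, ∀ p ∈ transportSet n m,
      ⟪gradient (fun x => slotFE Ds Dt x (α (k + 1))) (π k), π (k + 1)⟫
          + (1 / η) * vecKL (π (k + 1)) (π k)
        ≤ ⟪gradient (fun x => slotFE Ds Dt x (α (k + 1))) (π k), p⟫
          + (1 / η) * vecKL p (π k))
    (φ : ℕ → ℕ) (hφ : StrictMono φ)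
    (πinf : EuclideanSpace ℝ (Fin n × Fin m))
    (αinf : EuclideanSpace ℝ (Fin K ⊕ Fin K))
    (hlim : Filter.Tendsto (fun k => (π (φ k), α (φ k))) Filter.atTop
      (nhds (πinf, αinf)))
    (hπinfpos : ∀ p, 0 < πinf p) :
    πinf ∈ transportSet n m ∧ αinf ∈ weightSet K ∧
    (∀ a ∈ weightSet K,
      0 ≤ ⟪gradient (fun x => slotFE Ds Dt πinf x) αinf, a - αinf⟫) ∧
    (∀ p ∈ transportSet n m,
      0 ≤ ⟪gradient (fun x => slotFE Ds Dt x αinf) πinf, p - πinf⟫) := by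
  have hη : 0 < η := hε.trans hεη
  have hπφ : Tendsto (fun j => π (φ j)) atTop (𝓝 πinf) := (continuous_fst.tendsto _).comp hlim
  have hαφ : Tendsto (fun j => α (φ j)) atTop (𝓝 αinf) := (continuous_snd.tendsto _).comp hlim
  obtain ⟨hΔα, hΔπ⟩ := tendsto_sub_succ_of_alternating_decrease
    (one_div_two_mul_sub_div_two_pos hτ hτ') (one_div_two_mul_sub_div_two_pos hη hη')
    (fun k => add_mul_sq_norm_le_of_linearized_step (differentiable_slotFE_right Ds Dt (π k))
      (hLα _ (hπmem k)) (by simpa using hαmin k (α k) (hαmem k)))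
    (fun k => add_mul_sq_norm_le_of_linearized_step (differentiable_slotFE_left Ds Dt (α (k + 1)))
      (hLπ _ (hαmem (k + 1)))
      (inner_add_sq_norm_le_of_entropic_step hη (hπmem (k + 1)) (hπmem k) (hπpos k)
        (hπmin k (π k) (hπmem k))))
    hφ (tendsto_slotFE Ds Dt hlim)
  have hα₁ : Tendsto (fun j => α (φ j + 1)) atTop (𝓝 αinf) := by
    simpa using hαφ.add (hΔα.comp hφ.tendsto_atTop)
  have hπ₁ : Tendsto (fun j => π (φ j + 1)) atTop (𝓝 πinf) := by
    simpa using hπφ.add (hΔπ.comp hφ.tendsto_atTop)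
  have hπinf := (isClosed_transportSet n m).mem_of_tendsto hπφ (.of_forall fun j => hπmem _)
  have hαinf := (isClosed_weightSet K).mem_of_tendsto hαφ (.of_forall fun j => hαmem _)
  refine ⟨hπinf, hαinf, ?_, ?_⟩
  · exact inner_sub_nonneg_of_tendsto_prox_sq_norm (convex_weightSet K) hαinf (by positivity)
      (tendsto_gradient_slotFE_right Ds Dt hlim) hα₁ hαφ fun j => hαmin (φ j)
  · exact inner_sub_nonneg_of_tendsto_prox_vecKL (convex_transportSet n m) hπinf
      (fun p => (hπinfpos p).ne') (by positivity)
      (tendsto_gradient_slotFE_left Ds Dt (hπφ.prodMk_nhds hα₁)) hπ₁ hπφ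
      (fun j p => (hπpos _ p).le) (fun j => hπpos _) fun j => hπmin (φ j)
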